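/- Let n, r, s, t be positive integers and β = ν_3(n). Then in ℤ[q], ∑_{k=-n}^{n} (-1)^k q^{C(k,2)} [6n choose 3n+k]_q^r [4n choose 2n+k]_q^s [2n choose n+k]_q^t is divisible by Φ_{3^{β+1}}(q) = 1 + q^{3^β} + q^{2·3^β}. -/
import Mathlib


open Finset Polynomial

/-- The Gaussian (q-)binomial coefficient as a polynomial in `ℤ[q]`,
defined by the q-Pascal recurrence. -/
noncomputable def qbinom : ℕ → ℕ → Polynomial ℤ
  | _, 0 => 1
  | 0, _ + 1 => 0
  | n + 1, k + 1 => qbinom n k + X ^ (k + 1) * qbinom n (k + 1)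

/-- Gaussian binomial with an integer lower argument, zero when it is negative. -/
noncomputable def qbinomZ (n : ℕ) (k : ℤ) : Polynomial ℤ := if 0 ≤ k then qbinom n k.toNat else 0

noncomputable def qfact : ℕ → Polynomial ℤ
  | 0 => 1
  | m + 1 => qfact m * (X ^ (m + 1) - 1)

lemma qbinom_zero (n : ℕ) : qbinom n 0 = 1 := by cases n <;> rfl

lemma qbinom_eq_zero : ∀ {n k : ℕ}, n < k → qbinom n k = 0
  | 0, _ + 1, _ => rfl
  | n + 1, k + 1, h => by
    rw [qbinom, qbinom_eq_zero (by omega), qbinom_eq_zero (by omega), mul_zero, add_zero]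

lemma qbinom_self : ∀ n : ℕ, qbinom n n = 1
  | 0 => rfl
  | n + 1 => by rw [qbinom, qbinom_self n, qbinom_eq_zero (by omega), mul_zero, add_zero]

lemma qbinom_mul_qfact : ∀ n k : ℕ, k ≤ n →
    qbinom n k * qfact k * qfact (n - k) = qfact n
  | 0, 0, _ => by simp [qbinom_zero, qfact]
  | n + 1, 0, _ => by simp [qbinom_zero, qfact]
  | n + 1, k + 1, h => by
    rcases eq_or_lt_of_le h with h | h
    · obtain rfl : k = n := by omega
      simp [qbinom_self, qfact]
    · have hk : k + 1 ≤ n := by omega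
      have hn1 : n + 1 - (k + 1) = (n - (k + 1)) + 1 := by omega
      have hn2 : n - k = (n - (k + 1)) + 1 := by omega
      rw [qbinom, hn1]
      show (qbinom n k + X ^ (k + 1) * qbinom n (k + 1)) * qfact (k + 1) *
        qfact ((n - (k+1)) + 1) = qfact (n + 1)
      rw [add_mul, add_mul]
      have e1 : qbinom n k * qfact (k + 1) * qfact (n - (k+1) + 1) =
          qfact n * (X ^ (k + 1) - 1) := by
        rw [show qfact (k+1) = qfact k * (X ^ (k+1) - 1) from rfl, ← hn2,
          ← qbinom_mul_qfact n k (by omega)]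
        ring
      have e2 : X ^ (k + 1) * qbinom n (k + 1) * qfact (k + 1) * qfact (n - (k+1) + 1) =
          X ^ (k + 1) * (qfact n * (X ^ (n - (k+1) + 1) - 1)) := by
        rw [show qfact (n - (k+1) + 1) = qfact (n - (k+1)) * (X ^ (n - (k+1) + 1) - 1) from rfl]
        rw [← qbinom_mul_qfact n (k + 1) hk]
        ring
      rw [e1, e2]
      have e3 : (X : Polynomial ℤ) ^ (k + 1) * X ^ (n - (k + 1) + 1) = X ^ (n + 1) := by
        rw [← pow_add]; congr 1; omega
      show _ = qfact n * (X ^ (n+1) - 1)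
      linear_combination qfact n * e3

section
variable {d : ℕ} (hd : 1 < d)

lemma cyc_prime (hd : 1 < d) : Prime (cyclotomic d ℤ) :=
  UniqueFactorizationMonoid.irreducible_iff_prime.mp (cyclotomic.irreducible (by omega))

lemma cyc_dvd_of_dvd {j : ℕ} (hj : d ∣ j) : cyclotomic d ℤ ∣ X ^ j - 1 := by
  obtain ⟨e, rfl⟩ := hj
  calc cyclotomic d ℤ ∣ X ^ d - 1 := cyclotomic.dvd_X_pow_sub_one d ℤ
    _ ∣ (X ^ d) ^ e - 1 ^ e := sub_dvd_pow_sub_pow _ _ _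
    _ = X ^ (d * e) - 1 := by rw [← pow_mul, one_pow]

lemma cyc_not_dvd (hd : 1 < d) {j : ℕ} (hj : ¬ d ∣ j) : ¬ cyclotomic d ℤ ∣ X ^ j - 1 := by
  intro hdvd
  have hζ : IsPrimitiveRoot (Complex.exp (2 * Real.pi * Complex.I / d)) d :=
    Complex.isPrimitiveRoot_exp d (by omega)
  set ζ := Complex.exp (2 * Real.pi * Complex.I / d)
  have hroot : aeval ζ (cyclotomic d ℤ) = 0 := by
    have := hζ.isRoot_cyclotomic (show 0 < d by omega)
    rw [IsRoot.def] at this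
    rw [aeval_def, eval₂_eq_eval_map, map_cyclotomic]
    exact this
  obtain ⟨c, hc⟩ := hdvd
  have : (aeval ζ) (X ^ j - 1 : Polynomial ℤ) = 0 := by rw [hc, map_mul, hroot, zero_mul]
  simp only [map_sub, map_pow, aeval_X, map_one, sub_eq_zero] at this
  exact hj (hζ.dvd_of_pow_eq_one j this)

lemma cyc_sq_not_dvd (hd : 1 < d) {j : ℕ} (hj : j ≠ 0) :
    ¬ cyclotomic d ℤ ^ 2 ∣ X ^ j - 1 := by
  intro hdvd
  have hmap : (cyclotomic d ℚ) ^ 2 ∣ X ^ j - 1 := by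
    have := Polynomial.map_dvd (Int.castRingHom ℚ) hdvd
    simpa [Polynomial.map_pow, map_cyclotomic] using this
  have hsep : Squarefree (X ^ j - 1 : Polynomial ℚ) := by
    have : (X ^ j - C (1:ℚ)).Separable :=
      separable_X_pow_sub_C (1:ℚ) (by exact_mod_cast hj) one_ne_zero
    simpa using this.squarefree
  have := hsep (cyclotomic d ℚ) (by rwa [← sq])
  exact (cyclotomic.irreducible_rat (show 0 < d by omega)).not_isUnit this

lemma qfact_factor (hd : 1 < d) :
    ∀ M : ℕ, ∃ u : Polynomial ℤ, qfact M = cyclotomic d ℤ ^ (M / d) * u ∧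
      ¬ cyclotomic d ℤ ∣ u
  | 0 => ⟨1, by simp [qfact], fun h => (cyc_prime hd).not_isUnit (isUnit_of_dvd_one h)⟩
  | M + 1 => by
    obtain ⟨u, hu, hu2⟩ := qfact_factor hd M
    by_cases hdvd : d ∣ (M + 1)
    · obtain ⟨v, hv⟩ := cyc_dvd_of_dvd hdvd
      have hv2 : ¬ cyclotomic d ℤ ∣ v := by
        intro ⟨w, hw⟩
        exact cyc_sq_not_dvd hd (Nat.succ_ne_zero M)
          ⟨w, by rw [hv, hw]; ring⟩
      refine ⟨u * v, ?_, fun h =>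
        ((cyc_prime hd).dvd_mul.mp h).elim hu2 hv2⟩
      have hdiv : (M + 1) / d = M / d + 1 := by
        rw [Nat.succ_div, if_pos hdvd]
      rw [show qfact (M+1) = qfact M * (X ^ (M+1) - 1) from rfl, hu, hv, hdiv]
      ring
    · refine ⟨u * (X ^ (M+1) - 1), ?_, fun h =>
        ((cyc_prime hd).dvd_mul.mp h).elim hu2 (cyc_not_dvd hd hdvd)⟩
      have hdiv : (M + 1) / d = M / d := by
        rw [Nat.succ_div, if_neg hdvd, add_zero]
      rw [show qfact (M+1) = qfact M * (X ^ (M+1) - 1) from rfl, hu, hdiv]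
      ring

lemma cyclotomic_dvd_qbinom (hd : 1 < d) {A B : ℕ} (hBA : B ≤ A)
    (hc : d ≤ B % d + (A - B) % d) : cyclotomic d ℤ ∣ qbinom A B := by
  obtain ⟨u1, h1, n1⟩ := qfact_factor hd B
  obtain ⟨u2, h2, n2⟩ := qfact_factor hd (A - B)
  obtain ⟨u3, h3, n3⟩ := qfact_factor hd A
  have hA : A / d = B / d + (A - B) / d + 1 := by
    conv_lhs => rw [← Nat.add_sub_cancel' hBA]
    rw [Nat.add_div (show 0 < d by omega), if_pos hc]
  have key := qbinom_mul_qfact A B hBA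
  rw [h1, h2, h3, hA] at key
  have hΦ : (cyclotomic d ℤ) ≠ 0 := (cyc_prime hd).ne_zero
  have hcancel : qbinom A B * (u1 * u2) = cyclotomic d ℤ * u3 := by
    have hpow : (cyclotomic d ℤ) ^ (B / d + (A - B) / d) ≠ 0 := pow_ne_zero _ hΦ
    apply mul_left_cancel₀ hpow
    linear_combination key
  have : cyclotomic d ℤ ∣ qbinom A B * (u1 * u2) := ⟨u3, hcancel⟩
  rcases (cyc_prime hd).dvd_mul.mp this with h | h
  · exact h
  · exact absurd ((cyc_prime hd).dvd_mul.mp h) (by tauto)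

end

lemma toNat_mod_eq {d : ℕ} {x y : ℤ} (hx : 0 ≤ x) (hy : 0 ≤ y) (h : x % d = y % d) :
    x.toNat % d = y.toNat % d := by
  have h1 : ((x.toNat % d : ℕ) : ℤ) = x % d := by
    rw [Int.natCast_mod, Int.toNat_of_nonneg hx]
  have h2 : ((y.toNat % d : ℕ) : ℤ) = y % d := by
    rw [Int.natCast_mod, Int.toNat_of_nonneg hy]
  exact_mod_cast h1.trans (h.trans h2.symm)

theorem stmt16 (n r s t : ℕ) (hn : 0 < n) (hr : 0 < r) (hs : 0 < s) (ht : 0 < t) :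
    Polynomial.cyclotomic (3 ^ (padicValNat 3 n + 1)) ℤ ∣
      ∑ k ∈ Finset.Icc (-(n : ℤ)) (n : ℤ),
        Polynomial.C (k.negOnePow : ℤ) * X ^ (k * (k - 1) / 2).toNat *
          qbinomZ (6 * n) (3 * (n : ℤ) + k) ^ r *
          qbinomZ (4 * n) (2 * (n : ℤ) + k) ^ s *
          qbinomZ (2 * n) ((n : ℤ) + k) ^ t := by
  have hfact : Fact (Nat.Prime 3) := ⟨Nat.prime_three⟩
  set β := padicValNat 3 n with hβ
  set p3 : ℕ := 3 ^ β with hp3def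
  have hp3 : 0 < p3 := pow_pos (by norm_num) _
  set d : ℕ := 3 ^ (β + 1) with hddef
  have hd3 : d = 3 * p3 := by rw [hddef, hp3def, pow_succ, mul_comm]
  have hd1 : 1 < d := by omega
  have hdn : p3 ∣ n := pow_padicValNat_dvd
  obtain ⟨m, hnm⟩ := hdn
  have h3m : ¬ 3 ∣ m := by
    rintro ⟨m', hm'⟩
    have hD : d ∣ n := ⟨m', by rw [hnm, hm', hd3]; ring⟩
    have hcontra : 3 ^ (padicValNat 3 n + 1) ∣ n := by rw [← hβ, ← hddef]; exact hD
    exact pow_succ_padicValNat_not_dvd (p := 3) hn.ne' hcontra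
  have hm3 : m % 3 = 1 ∨ m % 3 = 2 := by omega
  apply Finset.dvd_sum
  intro k hk
  rw [Finset.mem_Icc] at hk
  obtain ⟨hk1, hk2⟩ := hk
  have e1 : qbinomZ (6 * n) (3 * (n : ℤ) + k) = qbinom (6 * n) (3 * (n : ℤ) + k).toNat := by
    rw [qbinomZ, if_pos (by omega)]
  have e2 : qbinomZ (4 * n) (2 * (n : ℤ) + k) = qbinom (4 * n) (2 * (n : ℤ) + k).toNat := by
    rw [qbinomZ, if_pos (by omega)]
  have e3 : qbinomZ (2 * n) ((n : ℤ) + k) = qbinom (2 * n) ((n : ℤ) + k).toNat := by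
    rw [qbinomZ, if_pos (by omega)]
  rw [e1, e2, e3]
  by_cases hdk : (d : ℤ) ∣ k
  · -- k divisible by d : the second or third binomial vanishes mod Φ
    obtain ⟨j, hj⟩ := hdk
    rcases hm3 with hm1 | hm2
    · -- m ≡ 1 [3] : use the middle binomial
      set B : ℕ := (2 * (n : ℤ) + k).toNat with hB
      have hBA : B ≤ 4 * n := by omega
      have h2nmod : (2 * n) % d = 2 * p3 := by
        have h1 : 2 * n = p3 * (2 * m) := by rw [hnm]; ring
        have h2 : d = p3 * 3 := by omega
        rw [h1, h2, Nat.mul_mod_mul_left, show (2 * m) % 3 = 2 by omega]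
        ring
      have hBmod : B % d = 2 * p3 := by
        have h0 : (2 * (n : ℤ)).toNat = 2 * n := by omega
        have h := toNat_mod_eq (d := d) (x := 2 * (n : ℤ) + k) (y := 2 * (n : ℤ))
          (by omega) (by positivity) (by rw [hj, Int.add_mul_emod_self_left])
        rw [← hB, h0, h2nmod] at h
        exact h
      have hCmod : (4 * n - B) % d = 2 * p3 := by
        have h0 : (2 * (n : ℤ)).toNat = 2 * n := by omega
        have h0' : (2 * (n : ℤ) - k).toNat = 4 * n - B := by omega
        have h := toNat_mod_eq (d := d) (x := 2 * (n : ℤ) - k) (y := 2 * (n : ℤ))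
          (by omega) (by positivity)
          (by rw [hj, show 2 * (n : ℤ) - (d : ℤ) * j = 2 * n + (d : ℤ) * (-j) by ring,
                Int.add_mul_emod_self_left])
        rw [h0', h0, h2nmod] at h
        exact h
      have hq : cyclotomic d ℤ ∣ qbinom (4 * n) B :=
        cyclotomic_dvd_qbinom hd1 hBA (by omega)
      exact ((dvd_pow hq hs.ne').mul_left _).mul_right _
    · -- m ≡ 2 [3] : use the last binomial
      set B : ℕ := ((n : ℤ) + k).toNat with hB
      have hBA : B ≤ 2 * n := by omega
      have hnmod : n % d = 2 * p3 := by
        have h2 : d = p3 * 3 := by omega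
        rw [hnm, h2, Nat.mul_mod_mul_left, hm2]
        ring
      have hBmod : B % d = 2 * p3 := by
        have h0 : ((n : ℤ)).toNat = n := by omega
        have h := toNat_mod_eq (d := d) (x := (n : ℤ) + k) (y := (n : ℤ))
          (by omega) (by positivity) (by rw [hj, Int.add_mul_emod_self_left])
        rw [← hB, h0, hnmod] at h
        exact h
      have hCmod : (2 * n - B) % d = 2 * p3 := by
        have h0 : ((n : ℤ)).toNat = n := by omega
        have h0' : ((n : ℤ) - k).toNat = 2 * n - B := by omega
        have h := toNat_mod_eq (d := d) (x := (n : ℤ) - k) (y := (n : ℤ))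
          (by omega) (by positivity)
          (by rw [hj, show (n : ℤ) - (d : ℤ) * j = n + (d : ℤ) * (-j) by ring,
                Int.add_mul_emod_self_left])
        rw [h0', h0, hnmod] at h
        exact h
      have hq : cyclotomic d ℤ ∣ qbinom (2 * n) B :=
        cyclotomic_dvd_qbinom hd1 hBA (by omega)
      exact (dvd_pow hq ht.ne').mul_left _
  · -- k not divisible by d : the first binomial vanishes mod Φ
    set B : ℕ := (3 * (n : ℤ) + k).toNat with hB
    have hBA : B ≤ 6 * n := by omega
    have h6n : (6 * n) % d = 0 := by
      have : 6 * n = d * (2 * m) := by rw [hnm, hd3]; ring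
      rw [this]; exact Nat.mul_mod_right _ _
    have hBne : B % d ≠ 0 := by
      intro h0
      apply hdk
      have hdB : (d : ℤ) ∣ (B : ℤ) := by
        exact_mod_cast Int.natCast_dvd_natCast.mpr (Nat.dvd_of_mod_eq_zero h0)
      have hBZ : (B : ℤ) = 3 * (n : ℤ) + k := by omega
      have hd3n : (d : ℤ) ∣ 3 * (n : ℤ) := ⟨m, by rw [hnm, hd3]; push_cast; ring⟩
      have hd' := hdB
      rw [hBZ] at hd'
      simpa using dvd_sub hd' hd3n
    have hcarry : d ≤ B % d + (6 * n - B) % d := by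
      have hsum : (B % d + (6 * n - B) % d) % d = 0 := by
        rw [← Nat.add_mod, Nat.add_sub_cancel' hBA, h6n]
      obtain ⟨e, he⟩ := Nat.dvd_of_mod_eq_zero hsum
      have hb : B % d < d := Nat.mod_lt _ (by omega)
      have hc : (6 * n - B) % d < d := Nat.mod_lt _ (by omega)
      rcases e with _ | e
      · omega
      · have hge : d ≤ d * (e + 1) := Nat.le_mul_of_pos_right d (by omega)
        omega
    have hq : cyclotomic d ℤ ∣ qbinom (6 * n) B :=
      cyclotomic_dvd_qbinom hd1 hBA hcarry
    exact (((dvd_pow hq hr.ne').mul_left _).mul_right _).mul_right _
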